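/- arXiv:0812.2379 — 7 statements merged into one kernel-verified Lean document; each statement's English description precedes it below -/
import Mathlib

section
/- For two m×n matrices over GF(q) at rank distance d, the number of matrices at rank distance t from the first and rank distance d−t from the second equals q^{t(d-t)} · [d choose t]_q, for all 0 ≤ t ≤ d ≤ min{n,m}. -/
/-- `galpha q m u = ∏_{i=0}^{u-1} (q^m - q^i)`. -/
def galpha (q m u : ℕ) : ℕ := ∏ i ∈ Finset.range u, (q ^ m - q ^ i)

/-- The Gaussian binomial coefficient `[n choose r]_q = α(n,r)/α(r,r)`. -/
def gauss (q n r : ℕ) : ℕ := galpha q n r / galpha q r r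

/-!
Write `φ = X - Y` and `A = X - Z`; the condition on `Z` becomes `rank A = t`,
`rank (φ - A) = d - t`. Such rank additivity forces the ranges of `A` and `φ - A` to be
independent, hence `range A ≤ range φ` and `ker φ ≤ ker A`, so `A = ι ∘ Q ∘ φ` for a unique
endomorphism `Q` of `W = range φ` (with `φ` corestricted onto `W` and `ι : W ↪ M`). The condition on `Q` reads `rank Q + rank (1 - Q) = dim W`,
i.e. `Q` is an idempotent of rank `t` on the `d`-dimensional space `W`. An idempotent is a
`t`-dimensional range `p` (`[d choose t]_q` choices) together with a projection onto `p`, and the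
projections onto `p` form a torsor under `Hom(W ⧸ p, p)` (`q^(t(d-t))` choices).
-/

open Module Submodule LinearMap

lemma galpha_pos {q m u : ℕ} (hq : 1 < q) (hu : u ≤ m) : 0 < galpha q m u :=
  Finset.prod_pos fun _ hi =>
    Nat.sub_pos_of_lt (Nat.pow_lt_pow_right hq ((Finset.mem_range.mp hi).trans_le hu))

theorem Nat.card_subtype_and_eq_mul {α β : Type*} [Finite α] [Finite β] (P : α → Prop)
    (f : α → β) (Q : β → Prop) {c : ℕ} (hc : ∀ b, Q b → Nat.card {a // P a ∧ f a = b} = c) :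
    Nat.card {a // P a ∧ Q (f a)} = Nat.card {b // Q b} * c := by
  classical
  have := Fintype.ofFinite β
  let e : (Σ b : {b // Q b}, {a // P a ∧ f a = b}) ≃ {a // P a ∧ Q (f a)} :=
    { toFun := fun x => ⟨x.2.1, x.2.2.1, by rw [x.2.2.2]; exact x.1.2⟩
      invFun := fun a => ⟨⟨f a, a.2.2⟩, a.1, a.2.1, rfl⟩
      left_inv x := Sigma.subtype_ext (Subtype.ext x.2.2.2) rfl
      right_inv := fun _ => rfl }
  rw [← Nat.card_congr e, Nat.card_sigma, Finset.sum_congr rfl fun b _ => hc b.1 b.2,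
    Finset.sum_const, Finset.card_univ, Nat.card_eq_fintype_card, smul_eq_mul]

section Projections

variable {R E : Type*} [Ring R] [AddCommGroup E] [Module R E]

def Submodule.projEquivQuotientLinearMap (p : Submodule R E) (f₀ : E →ₗ[R] p)
    (hf₀ : ∀ x : p, f₀ x = x) :
    {f : E →ₗ[R] p // ∀ x : p, f x = x} ≃ (E ⧸ p →ₗ[R] p) where
  toFun f := p.liftQ (f.1 - f₀) fun x hx => by simp [f.2 ⟨x, hx⟩, hf₀ ⟨x, hx⟩]
  invFun g := ⟨f₀ + g ∘ₗ p.mkQ, fun x => by simp [hf₀, (Submodule.Quotient.mk_eq_zero p).2 x.2]⟩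
  left_inv f := Subtype.ext (LinearMap.ext fun x => by simp)
  right_inv g := LinearMap.ext fun y => by
    obtain ⟨x, rfl⟩ := p.mkQ_surjective y
    simp

end Projections

section RankAdditivity

variable {F N M : Type*} [Field F] [AddCommGroup N] [Module F N] [AddCommGroup M] [Module F M]
  [FiniteDimensional F M]

theorem LinearMap.disjoint_range_of_finrank_add_le {g h : N →ₗ[F] M}
    (hgh : finrank F (range g) + finrank F (range h) ≤ finrank F (range (g + h))) :
    Disjoint (range g) (range h) := by
  have hsup := Submodule.finrank_mono (range_add_le g h)
  have hdim := Submodule.finrank_sup_add_finrank_inf_eq (range g) (range h)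
  rw [disjoint_iff, ← Submodule.finrank_eq_zero]
  omega

theorem LinearMap.range_le_range_add_of_finrank_add_le {g h : N →ₗ[F] M}
    (hgh : finrank F (range g) + finrank F (range h) ≤ finrank F (range (g + h))) :
    range g ≤ range (g + h) := by
  have hinf : range g ⊓ range h = ⊥ := (disjoint_range_of_finrank_add_le hgh).eq_bot
  have hdim := Submodule.finrank_sup_add_finrank_inf_eq (range g) (range h)
  rw [hinf, finrank_bot] at hdim
  rw [Submodule.eq_of_le_of_finrank_le (range_add_le g h) (by omega)]
  exact le_sup_left

theorem LinearMap.ker_add_le_ker_of_finrank_add_le {g h : N →ₗ[F] M}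
    (hgh : finrank F (range g) + finrank F (range h) ≤ finrank F (range (g + h))) :
    ker (g + h) ≤ ker g := by
  intro x hx
  have hgx : g x = -h x := eq_neg_of_add_eq_zero_left hx
  have : g x ∈ range g ⊓ range h := ⟨mem_range_self g x, hgx ▸ neg_mem (mem_range_self h x)⟩
  rwa [(disjoint_range_of_finrank_add_le hgh).eq_bot, Submodule.mem_bot] at this

theorem LinearMap.isIdempotentElem_iff_finrank_range_add_finrank_range_one_sub
    (Q : Module.End F M) :
    IsIdempotentElem Q ↔ finrank F (range Q) + finrank F (range (1 - Q)) = finrank F M := by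
  constructor
  · intro hQ
    rw [← hQ.ker_eq_range_one_sub]
    exact Q.finrank_range_add_finrank_ker
  · intro hrank
    have hdisj : Disjoint (range Q) (range (1 - Q)) := by
      refine disjoint_range_of_finrank_add_le ?_
      rw [add_sub_cancel, hrank, Module.End.one_eq_id, range_id, finrank_top]
    refine LinearMap.ext fun x => ?_
    have hmem : Q x - Q (Q x) ∈ range Q ⊓ range (1 - Q) :=
      ⟨⟨x - Q x, by simp⟩, ⟨Q x, by simp⟩⟩
    rw [hdisj.eq_bot, Submodule.mem_bot, sub_eq_zero] at hmem
    exact hmem.symm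

end RankAdditivity

section Factorisation

variable {F N M : Type*} [Field F] [AddCommGroup N] [Module F N] [AddCommGroup M] [Module F M]

def LinearMap.throughRange (φ : N →ₗ[F] M) : Module.End F (range φ) →ₗ[F] N →ₗ[F] M where
  toFun P := (range φ).subtype ∘ₗ P ∘ₗ φ.rangeRestrict
  map_add' _ _ := by ext; simp
  map_smul' _ _ := by ext; simp

variable (φ : N →ₗ[F] M)

theorem LinearMap.throughRange_apply (P : Module.End F (range φ)) (x : N) :
    φ.throughRange P x = P (φ.rangeRestrict x) := rfl

@[simp]
theorem LinearMap.throughRange_one : φ.throughRange 1 = φ := rfl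

theorem LinearMap.throughRange_injective : Function.Injective φ.throughRange := by
  intro P P' h
  refine LinearMap.ext fun y => ?_
  obtain ⟨x, rfl⟩ := φ.surjective_rangeRestrict y
  exact Subtype.ext (LinearMap.congr_fun h x)

theorem LinearMap.finrank_range_throughRange (P : Module.End F (range φ)) :
    finrank F (range (φ.throughRange P)) = finrank F (range P) := by
  rw [throughRange, LinearMap.coe_mk, AddHom.coe_mk, range_comp,
    range_comp_of_range_eq_top P (range_rangeRestrict φ), Submodule.finrank_map_subtype_eq]

theorem LinearMap.exists_throughRange_eq {f : N →ₗ[F] M} (hrange : range f ≤ range φ)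
    (hker : ker φ ≤ ker f) : ∃ P, φ.throughRange P = f := by
  let f' : N →ₗ[F] range φ := f.codRestrict (range φ) fun x => hrange (mem_range_self f x)
  have hker' : ker φ ≤ ker f' := fun x hx => Subtype.ext (hker hx)
  refine ⟨(ker φ).liftQ f' hker' ∘ₗ φ.quotKerEquivRange.symm.toLinearMap, LinearMap.ext fun x => ?_⟩
  have hx : φ.rangeRestrict x = φ.quotKerEquivRange (Submodule.Quotient.mk x) :=
    Subtype.ext (φ.quotKerEquivRange_apply_mk x).symm
  simp [throughRange_apply, hx, f']

end Factorisation

section Counting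

variable {F V : Type*} [Field F] [Fintype F] [AddCommGroup V] [Module F V] [Finite V]

local notation "q" => Fintype.card F

theorem card_linearIndependent_eq_galpha {k : ℕ} (hk : k ≤ finrank F V) :
    Nat.card {s : Fin k → V // LinearIndependent F s} = galpha q (finrank F V) k := by
  rw [card_linearIndependent hk, galpha]
  exact Fin.prod_univ_eq_prod_range (fun i => q ^ finrank F V - q ^ i) k

theorem card_linearIndependent_span_eq (p : Submodule F V) :
    Nat.card {s : Fin (finrank F p) → V // LinearIndependent F s ∧ span F (Set.range s) = p} =
      galpha q (finrank F p) (finrank F p) := by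
  let e : {s : Fin (finrank F p) → p // LinearIndependent F s} ≃
      {s : Fin (finrank F p) → V // LinearIndependent F s ∧ span F (Set.range s) = p} :=
    { toFun := fun s => ⟨p.subtype ∘ s.1, s.2.map' p.subtype p.ker_subtype, by
        rw [Set.range_comp, Submodule.span_image,
          s.2.span_eq_top_of_card_eq_finrank' (Fintype.card_fin _), Submodule.map_subtype_top]⟩
      invFun := fun s => ⟨fun i => ⟨s.1 i, s.2.2.le (subset_span ⟨i, rfl⟩)⟩,
        (LinearMap.linearIndependent_iff p.subtype p.ker_subtype).1 s.2.1⟩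
      left_inv := fun _ => rfl
      right_inv := fun _ => rfl }
  rw [← Nat.card_congr e, card_linearIndependent_eq_galpha le_rfl]

theorem card_submodule_finrank_eq {t : ℕ} (ht : t ≤ finrank F V) :
    Nat.card {p : Submodule F V // finrank F p = t} = gauss q (finrank F V) t := by
  have hfibre := Nat.card_subtype_and_eq_mul (fun s : Fin t → V => LinearIndependent F s)
    (fun s => span F (Set.range s)) (fun p => finrank F p = t) (c := galpha q t t)
    fun p hp => by subst hp; exact card_linearIndependent_span_eq p
  have hspan : ∀ s : Fin t → V, LinearIndependent F s →
      finrank F (span F (Set.range s)) = t := fun s hs => by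
    rw [finrank_span_eq_card hs, Fintype.card_fin]
  rw [Nat.card_congr (Equiv.subtypeEquivRight fun s => and_iff_left_of_imp (hspan s)),
    card_linearIndependent_eq_galpha ht] at hfibre
  rw [gauss, hfibre, Nat.mul_div_cancel _ (galpha_pos Fintype.one_lt_card le_rfl)]

theorem Submodule.card_proj (p : Submodule F V) :
    Nat.card {f : V →ₗ[F] p // ∀ x : p, f x = x} =
      q ^ ((finrank F V - finrank F p) * finrank F p) := by
  obtain ⟨p', hp'⟩ := p.exists_isCompl
  rw [Nat.card_congr (p.projEquivQuotientLinearMap _ (p.projectionOnto_apply_left hp')),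
    Module.natCard_eq_pow_finrank (K := F), Nat.card_eq_fintype_card, finrank_linearMap,
    ← p.finrank_quotient_add_finrank, Nat.add_sub_cancel]

theorem card_isIdempotentElem_finrank_range_eq {t : ℕ} (ht : t ≤ finrank F V) :
    Nat.card {Q : Module.End F V // IsIdempotentElem Q ∧ finrank F (range Q) = t} =
      q ^ (t * (finrank F V - t)) * gauss q (finrank F V) t := by
  have := Module.finite_of_finite F (M := Module.End F V)
  have hfibre := Nat.card_subtype_and_eq_mul IsIdempotentElem (fun Q : Module.End F V => range Q)
    (fun p => finrank F p = t) (c := q ^ ((finrank F V - t) * t)) fun p hp => by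
      rw [Nat.card_congr p.isIdempotentElemEquiv, p.card_proj, hp]
  rw [hfibre, card_submodule_finrank_eq ht, mul_comm, mul_comm t]

end Counting

section RankSplit

variable {F N M : Type*} [Field F] [Fintype F] [AddCommGroup N] [Module F N]
  [AddCommGroup M] [Module F M] [FiniteDimensional F M]

local notation "q" => Fintype.card F

theorem LinearMap.card_finrank_range_eq_and_finrank_range_sub_eq (φ : N →ₗ[F] M) {t : ℕ}
    (ht : t ≤ finrank F (range φ)) :
    Nat.card {A : N →ₗ[F] M //
        finrank F (range A) = t ∧ finrank F (range (φ - A)) = finrank F (range φ) - t} =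
      q ^ (t * (finrank F (range φ) - t)) * gauss q (finrank F (range φ)) t := by
  have := Module.finite_of_finite F (M := range φ)
  have hsub_eq : ∀ Q, φ - φ.throughRange Q = φ.throughRange (1 - Q) := fun Q => by
    rw [map_sub, throughRange_one]
  have hsplit : {A : N →ₗ[F] M |
      finrank F (range A) = t ∧ finrank F (range (φ - A)) = finrank F (range φ) - t} =
      φ.throughRange '' {Q | IsIdempotentElem Q ∧ finrank F (range Q) = t} := by
    ext A
    constructor
    · rintro ⟨hA, hφA⟩
      have hadd : finrank F (range A) + finrank F (range (φ - A)) ≤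
          finrank F (range (A + (φ - A))) := by
        rw [add_sub_cancel]; omega
      obtain ⟨Q, rfl⟩ := φ.exists_throughRange_eq
        (add_sub_cancel A φ ▸ range_le_range_add_of_finrank_add_le hadd)
        (add_sub_cancel A φ ▸ ker_add_le_ker_of_finrank_add_le hadd)
      rw [finrank_range_throughRange] at hA
      rw [hsub_eq, finrank_range_throughRange] at hφA
      exact ⟨Q, ⟨(isIdempotentElem_iff_finrank_range_add_finrank_range_one_sub Q).2 (by omega),
        hA⟩, rfl⟩
    · rintro ⟨Q, ⟨hQ, hQt⟩, rfl⟩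
      have hrank := (isIdempotentElem_iff_finrank_range_add_finrank_range_one_sub Q).1 hQ
      rw [Set.mem_ofPred_eq, hsub_eq, finrank_range_throughRange, finrank_range_throughRange]
      exact ⟨hQt, by omega⟩
  rw [← Set.coe_ofPred, hsplit, Nat.card_image_of_injective φ.throughRange_injective]
  exact card_isIdempotentElem_finrank_range_eq ht

end RankSplit

theorem Matrix.rank_eq_finrank_range_toLin' {m n R : Type*} [Fintype n] [DecidableEq n]
    [CommRing R] (A : Matrix m n R) : A.rank = finrank R (range (Matrix.toLin' A)) := by
  rw [Matrix.toLin'_apply', Matrix.rank]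

theorem stmt2_general (F : Type) [Field F] [Fintype F] (m n t d : ℕ)
    (ht : t ≤ d)
    (X Y : Matrix (Fin m) (Fin n) F) (hXY : (X - Y).rank = d) :
    Nat.card {Z : Matrix (Fin m) (Fin n) F // (Z - X).rank = t ∧ (Z - Y).rank = d - t} =
      (Fintype.card F) ^ (t * (d - t)) * gauss (Fintype.card F) d t := by
  let φ := Matrix.toLin' (X - Y)
  have hφ : finrank F (range φ) = d := by rw [← hXY, Matrix.rank_eq_finrank_range_toLin']
  let e : Matrix (Fin m) (Fin n) F ≃ ((Fin n → F) →ₗ[F] (Fin m → F)) :=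
    (Equiv.subLeft X).trans Matrix.toLin'.toEquiv
  have he : ∀ Z, ((Z - X).rank = t ∧ (Z - Y).rank = d - t) ↔
      (finrank F (range (e Z)) = t ∧ finrank F (range (φ - e Z)) = finrank F (range φ) - t) := by
    intro Z
    have hZX : Matrix.toLin' (Z - X) = -e Z := by simp [e]
    have hZY : Matrix.toLin' (Z - Y) = φ - e Z := by simp [e, φ]
    rw [Matrix.rank_eq_finrank_range_toLin', Matrix.rank_eq_finrank_range_toLin', hZX, hZY,
      range_neg, hφ]
  rw [Nat.card_congr (e.subtypeEquiv (q := fun A =>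
    finrank F (range A) = t ∧ finrank F (range (φ - A)) = finrank F (range φ) - t) he), ← hφ]
  exact φ.card_finrank_range_eq_and_finrank_range_sub_eq (hφ ▸ ht)

theorem stmt2 (F : Type) [Field F] [Fintype F] (m n t d : ℕ)
    (ht : t ≤ d) (hd : d ≤ min n m)
    (X Y : Matrix (Fin m) (Fin n) F) (hXY : (X - Y).rank = d) :
    Nat.card {Z : Matrix (Fin m) (Fin n) F // (Z - X).rank = t ∧ (Z - Y).rank = d - t} =
      (Fintype.card F) ^ (t * (d - t)) * gauss (Fintype.card F) d t :=
  stmt2_general F m n t d ht X Y hXY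
end

section
/- If R and S are m×n matrices over GF(q) with the same row space, then for every subspace W of GF(q)^n and every integer s, the number of m×n matrices with row space W at rank distance s from R equals the number of such matrices at rank distance s from S. -/
/-!
Two matrices with the same row space differ by an invertible left factor, `S = A * R`: the maps
`x ↦ x R` and `x ↦ x S` have the same image, hence kernels of equal dimension, and splitting the
domain as image × kernel for each of them yields an automorphism `e` with `x S = e(x) R`.
Left multiplication by `A` preserves row spaces and ranks and sends `X - R` to `A * X - S`,
so `X ↦ A * X` is a bijection between the two sets being counted.
-/

open LinearMap Matrix

/-- The row space of a matrix: the span of its rows. -/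
def rowSpace {F : Type} [Field F] {m n : ℕ} (A : Matrix (Fin m) (Fin n) F) :
    Submodule F (Fin n → F) :=
  Submodule.span F (Set.range fun i => A i)

section LinearAlgebra

variable {K V W : Type*} [DivisionRing K] [AddCommGroup V] [Module K V]
  [AddCommGroup W] [Module K W]

theorem LinearMap.exists_linearEquiv_range_prod_ker (f : V →ₗ[K] W) :
    ∃ Φ : V ≃ₗ[K] range f × ker f, ∀ v, ((Φ v).1 : W) = f v := by
  obtain ⟨C, hC⟩ := (ker f).exists_isCompl
  refine ⟨equivProdOfSurjectiveOfIsCompl f.rangeRestrict ((ker f).projectionOnto C hC)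
    f.range_rangeRestrict (Submodule.range_projectionOnto hC) ?_, fun v => rfl⟩
  rwa [ker_rangeRestrict, Submodule.ker_projectionOnto]

theorem LinearMap.exists_linearEquiv_comp_eq_of_range_eq [FiniteDimensional K V]
    {f g : V →ₗ[K] W} (h : range f = range g) :
    ∃ e : V ≃ₗ[K] V, ∀ v, f (e v) = g v := by
  obtain ⟨Φf, hΦf⟩ := f.exists_linearEquiv_range_prod_ker
  obtain ⟨Φg, hΦg⟩ := g.exists_linearEquiv_range_prod_ker
  have hker : Module.finrank K (ker g) = Module.finrank K (ker f) := by
    have hf := f.finrank_range_add_finrank_ker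
    have hg := g.finrank_range_add_finrank_ker
    rw [h] at hf
    omega
  let e := Φg ≪≫ₗ (LinearEquiv.ofEq _ _ h.symm).prodCongr (.ofFinrankEq _ _ hker) ≪≫ₗ Φf.symm
  refine ⟨e, fun v => ?_⟩
  rw [← hΦf, ← hΦg]
  simp [e]

end LinearAlgebra

section UnitsMul

variable {ι κ R : Type*} [Fintype ι] [DecidableEq ι]

def Matrix.unitsMulLeftEquiv [Semiring R] (A : GL ι R) : Matrix ι κ R ≃ Matrix ι κ R where
  toFun X := A.val * X
  invFun X := A⁻¹.val * X
  left_inv X := by simp [← Matrix.mul_assoc]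
  right_inv X := by simp [← Matrix.mul_assoc]

theorem Matrix.rank_units_mul [CommRing R] [Fintype κ] (A : GL ι R) (X : Matrix ι κ R) :
    (A.val * X).rank = X.rank :=
  rank_mul_eq_right_of_isUnit_det _ _ ((Matrix.isUnit_iff_isUnit_det _).mp A.isUnit)

end UnitsMul

variable {F : Type} [Field F] {k m n : ℕ}

theorem rowSpace_eq_range_vecMulLinear (A : Matrix (Fin m) (Fin n) F) :
    rowSpace A = range A.vecMulLinear :=
  (range_vecMulLinear A).symm

theorem rowSpace_mul_le (A : Matrix (Fin k) (Fin m) F) (X : Matrix (Fin m) (Fin n) F) :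
    rowSpace (A * X) ≤ rowSpace X := by
  rw [rowSpace_eq_range_vecMulLinear, rowSpace_eq_range_vecMulLinear]
  rintro _ ⟨x, rfl⟩
  exact ⟨x ᵥ* A, by simp [vecMul_vecMul]⟩

theorem rowSpace_units_mul (A : GL (Fin m) F) (X : Matrix (Fin m) (Fin n) F) :
    rowSpace (A.val * X) = rowSpace X := by
  refine le_antisymm (rowSpace_mul_le _ _) ?_
  calc rowSpace X = rowSpace (A⁻¹.val * (A.val * X)) := by
        rw [← Matrix.mul_assoc, Units.inv_mul, Matrix.one_mul]
    _ ≤ rowSpace (A.val * X) := rowSpace_mul_le _ _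

theorem exists_units_mul_eq_of_rowSpace_eq {R S : Matrix (Fin m) (Fin n) F}
    (h : rowSpace R = rowSpace S) :
    ∃ A : GL (Fin m) F, S = A.val * R := by
  rw [rowSpace_eq_range_vecMulLinear, rowSpace_eq_range_vecMulLinear] at h
  obtain ⟨e, he⟩ := exists_linearEquiv_comp_eq_of_range_eq h
  set A := (LinearMap.toMatrix' (e : (Fin m → F) →ₗ[F] Fin m → F))ᵀ
  have hA : ∀ x, x ᵥ* A = e x := fun x => by simp [A, vecMul_transpose]
  have hAunit : IsUnit A := vecMul_surjective_iff_isUnit.mp fun y =>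
    ⟨e.symm y, by simp [hA]⟩
  refine ⟨hAunit.unit, vecMul_injective (funext fun x => ?_)⟩
  simpa [← vecMul_vecMul, hA] using (he x).symm

theorem card_rowSpace_eq_rank_sub_units_mul (A : GL (Fin m) F) (R : Matrix (Fin m) (Fin n) F)
    (W : Submodule F (Fin n → F)) (s : ℕ) :
    Nat.card {X : Matrix (Fin m) (Fin n) F // rowSpace X = W ∧ (X - R).rank = s} =
      Nat.card {X : Matrix (Fin m) (Fin n) F // rowSpace X = W ∧ (X - A.val * R).rank = s} :=
  Nat.card_congr <| (unitsMulLeftEquiv A).subtypeEquiv fun X => by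
    simp [unitsMulLeftEquiv, rowSpace_units_mul, ← Matrix.mul_sub, rank_units_mul]

theorem stmt5_general (F : Type) [Field F] (m n : ℕ)
    (R S : Matrix (Fin m) (Fin n) F) (h : rowSpace R = rowSpace S)
    (W : Submodule F (Fin n → F)) (s : ℕ) :
    Nat.card {X : Matrix (Fin m) (Fin n) F // rowSpace X = W ∧ (X - R).rank = s} =
      Nat.card {X : Matrix (Fin m) (Fin n) F // rowSpace X = W ∧ (X - S).rank = s} := by
  obtain ⟨A, rfl⟩ := exists_units_mul_eq_of_rowSpace_eq h
  exact card_rowSpace_eq_rank_sub_units_mul A R W s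

theorem stmt5 (F : Type) [Field F] [Fintype F] (m n : ℕ)
    (R S : Matrix (Fin m) (Fin n) F) (h : rowSpace R = rowSpace S)
    (W : Submodule F (Fin n → F)) (s : ℕ) :
    Nat.card {X : Matrix (Fin m) (Fin n) F // rowSpace X = W ∧ (X - R).rank = s} =
      Nat.card {X : Matrix (Fin m) (Fin n) F // rowSpace X = W ∧ (X - S).rank = s} :=
  stmt5_general F m n R S h W s
end

section
/- The injection distance d_I(U,V) = max{dim(U), dim(V)} − dim(U∩V) is a metric on the set of all subspaces of GF(q)^n, and it satisfies d_I(U,V) = (1/2)·d_S(U,V) + (1/2)·|dim(U) − dim(V)|. -/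
/-- The subspace distance `d_S(U,V) = dim(U+V) - dim(U∩V)`. -/
noncomputable def dS {F : Type} [Field F] {n : ℕ} (U V : Submodule F (Fin n → F)) : ℕ :=
  Module.finrank F ↥(U ⊔ V) - Module.finrank F ↥(U ⊓ V)

/-- The injection distance `d_I(U,V) = max(dim U, dim V) - dim(U∩V)`. -/
noncomputable def dI {F : Type} [Field F] {n : ℕ} (U V : Submodule F (Fin n → F)) : ℕ :=
  max (Module.finrank F ↥U) (Module.finrank F ↥V) - Module.finrank F ↥(U ⊓ V)

lemma inf_key {F : Type} [Field F] {n : ℕ} (U V W : Submodule F (Fin n → F)) :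
    Module.finrank F ↥(U ⊓ V) + Module.finrank F ↥(V ⊓ W) ≤
      Module.finrank F ↥V + Module.finrank F ↥(U ⊓ W) := by
  have h := Submodule.finrank_sup_add_finrank_inf_eq (U ⊓ V) (V ⊓ W)
  have h1 : Module.finrank F ↥((U ⊓ V) ⊔ (V ⊓ W)) ≤ Module.finrank F ↥V :=
    Submodule.finrank_mono (sup_le inf_le_right inf_le_left)
  have h2 : Module.finrank F ↥((U ⊓ V) ⊓ (V ⊓ W)) ≤ Module.finrank F ↥(U ⊓ W) :=
    Submodule.finrank_mono (le_inf (inf_le_left.trans inf_le_left)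
      (inf_le_right.trans inf_le_right))
  omega

theorem stmt8 (F : Type) [Field F] [Fintype F] (n : ℕ) :
    (∀ U V : Submodule F (Fin n → F), 0 ≤ dI U V) ∧
    (∀ U V : Submodule F (Fin n → F), (dI U V = 0 ↔ U = V)) ∧
    (∀ U V : Submodule F (Fin n → F), dI U V = dI V U) ∧
    (∀ U V W : Submodule F (Fin n → F), dI U W ≤ dI U V + dI V W) ∧
    (∀ U V : Submodule F (Fin n → F),
      (dI U V : ℚ) = (dS U V : ℚ) / 2 +
        |(Module.finrank F ↥U : ℚ) - (Module.finrank F ↥V : ℚ)| / 2) := by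
  refine ⟨fun U V => Nat.zero_le _, ?_, ?_, ?_, ?_⟩
  · intro U V
    constructor
    · intro h
      unfold dI at h
      have hU : Module.finrank F ↥(U ⊓ V) ≤ Module.finrank F ↥U :=
        Submodule.finrank_mono inf_le_left
      have hV : Module.finrank F ↥(U ⊓ V) ≤ Module.finrank F ↥V :=
        Submodule.finrank_mono inf_le_right
      have hU' : U ⊓ V = U :=
        Submodule.eq_of_le_of_finrank_eq inf_le_left (by omega)
      have hV' : U ⊓ V = V :=
        Submodule.eq_of_le_of_finrank_eq inf_le_right (by omega)
      exact hU'.symm.trans hV'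
    · rintro rfl
      unfold dI
      rw [inf_idem, max_self, Nat.sub_self]
  · intro U V
    unfold dI
    rw [inf_comm, max_comm]
  · intro U V W
    unfold dI
    have h := inf_key U V W
    have hUW : Module.finrank F ↥(U ⊓ W) ≤ Module.finrank F ↥U :=
      Submodule.finrank_mono inf_le_left
    have hUV : Module.finrank F ↥(U ⊓ V) ≤ Module.finrank F ↥U :=
      Submodule.finrank_mono inf_le_left
    have hVW : Module.finrank F ↥(V ⊓ W) ≤ Module.finrank F ↥V :=
      Submodule.finrank_mono inf_le_left
    omega
  · intro U V
    have hsum := Submodule.finrank_sup_add_finrank_inf_eq U V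
    have hU : Module.finrank F ↥(U ⊓ V) ≤ Module.finrank F ↥U :=
      Submodule.finrank_mono inf_le_left
    have hV : Module.finrank F ↥(U ⊓ V) ≤ Module.finrank F ↥V :=
      Submodule.finrank_mono inf_le_right
    unfold dI dS
    set a := Module.finrank F ↥U
    set b := Module.finrank F ↥V
    set i := Module.finrank F ↥(U ⊓ V)
    set s := Module.finrank F ↥(U ⊔ V)
    have h2 : (↑(s - i) : ℚ) = (s : ℚ) - i := by
      rw [Nat.cast_sub (by omega)]
    have hsq : (s : ℚ) + i = a + b := by exact_mod_cast hsum
    rcases le_total a b with hab | hab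
    · rw [max_eq_right hab, Nat.cast_sub hV, h2,
        abs_of_nonpos (sub_nonpos.mpr (by exact_mod_cast hab))]
      linarith
    · rw [max_eq_left hab, Nat.cast_sub hU, h2,
        abs_of_nonneg (sub_nonneg.mpr (by exact_mod_cast hab))]
      linarith
end

section
/- Let r, s, d, n be integers with 0 ≤ r ≤ n. The number of s-dimensional subspaces of GF(q)^n at subspace distance d from a fixed r-dimensional subspace equals q^{u(d−u)} · [r choose u]_q · [n−r choose d−u]_q if u = (r+d−s)/2 is a nonnegative integer (with 0 ≤ u ≤ min{r,d} and d−u ≤ n−r), and equals 0 if r+d−s is odd. -/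
/-!
Since `dim (U + V) + dim (U ∩ V) = r + s`, the distance is `r + s - 2 dim (U ∩ V)`: so `r + d - s`
is even and, with `2u = r + d - s`, the condition reads `dim (U ∩ V) = r - u`. Sorting these `V` by
`W = U ∩ V`, there are `[r choose r - u]_q = [r choose u]_q` choices of `W ≤ U`, and `V ↦ V / W`
identifies the `V` of dimension `s` with `U ∩ V = W` with the `(d - u)`-dimensional subspaces of
`F^n / W` meeting the `u`-dimensional `U / W` trivially. A `k`-dimensional subspace has `α(k, k)`
ordered bases, and through a section of `Q → Q / A` the `k`-tuples independent modulo `A` are the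
independent `k`-tuples of `Q / A` shifted by arbitrary `A`-valued tuples; hence there are
`q^(k dim A) [dim Q - dim A choose k]_q` subspaces of dimension `k` meeting `A` trivially.
-/

open Module Submodule

theorem Nat.card_subtype_eq_mul_of_card_fiber {α β : Type*} [Finite α] [Finite β]
    {p : α → Prop} {q : β → Prop} (f : α → β) (hf : ∀ a, p a → q (f a)) {c : ℕ}
    (h : ∀ b, q b → Nat.card {a // p a ∧ f a = b} = c) :
    Nat.card {a // p a} = Nat.card {b // q b} * c := by
  have := Fintype.ofFinite {b // q b}
  let g : {a // p a} → {b // q b} := fun a => ⟨f a, hf a a.2⟩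
  have hg : ∀ b, Nat.card {a // g a = b} = c := fun b => by
    rw [← h b b.2, ← Nat.card_congr (Equiv.subtypeSubtypeEquivSubtypeInter p (f · = b))]
    simp only [g, Subtype.ext_iff]
  rw [Nat.card_congr (Equiv.sigmaFiberEquiv g).symm, Nat.card_sigma]
  simp [hg, Nat.card_eq_fintype_card]

section GaussianCoefficients

theorem galpha_eq_prod_fin (q m k : ℕ) : galpha q m k = ∏ i : Fin k, (q ^ m - q ^ (i : ℕ)) :=
  (Fin.prod_univ_eq_prod_range (fun i => q ^ m - q ^ i) k).symm

theorem galpha_self_pos {q : ℕ} (hq : 1 < q) (k : ℕ) : 0 < galpha q k k :=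
  Finset.prod_pos fun _ hi => Nat.sub_pos_of_lt (Nat.pow_lt_pow_right hq (Finset.mem_range.1 hi))

theorem galpha_self_eq_mul (q : ℕ) {m k : ℕ} (h : k ≤ m) :
    galpha q m m = galpha q m k * (q ^ (k * (m - k)) * galpha q (m - k) (m - k)) := by
  have hm : m = k + (m - k) := by omega
  calc galpha q m m = galpha q m k * ∏ i ∈ Finset.range (m - k), (q ^ m - q ^ (k + i)) := by
        rw [galpha, galpha, ← Finset.prod_range_add, ← hm]
    _ = galpha q m k * ∏ i ∈ Finset.range (m - k), q ^ k * (q ^ (m - k) - q ^ i) := by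
        congr 1
        refine Finset.prod_congr rfl fun i _ => ?_
        rw [Nat.mul_sub, ← pow_add, ← pow_add, ← hm]
    _ = galpha q m k * (q ^ (k * (m - k)) * galpha q (m - k) (m - k)) := by
        rw [Finset.prod_mul_distrib, Finset.prod_const, Finset.card_range, ← pow_mul]
        rfl

end GaussianCoefficients

section QuotientTuples

variable {R M : Type*} [Ring R] [AddCommGroup M] [Module R M]

theorem linearIndependent_mkQ_comp_iff {ι : Type*} {A : Submodule R M} {w : ι → M} :
    LinearIndependent R (A.mkQ ∘ w) ↔
      LinearIndependent R w ∧ Disjoint (span R (Set.range w)) A := by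
  refine ⟨fun h => ⟨h.of_comp _, by simpa using range_ker_disjoint h⟩, fun ⟨hw, hA⟩ => ?_⟩
  exact hw.map (by simpa using hA)

theorem mkQ_coe_eq_zero {A : Submodule R M} (a : A) : A.mkQ a = 0 :=
  (Quotient.mk_eq_zero A).2 a.2

def linearIndependentMkQEquiv (A : Submodule R M) {σ : (M ⧸ A) →ₗ[R] M}
    (hσ : ∀ y, A.mkQ (σ y) = y) (k : ℕ) :
    {w : Fin k → M // LinearIndependent R (A.mkQ ∘ w)} ≃
      (Fin k → A) × {w : Fin k → M ⧸ A // LinearIndependent R w} where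
  toFun w := (fun i => ⟨w.1 i - σ (A.mkQ (w.1 i)), by
      rw [← Quotient.mk_eq_zero, ← mkQ_apply, map_sub, hσ, sub_self]⟩, ⟨A.mkQ ∘ w.1, w.2⟩)
  invFun p := ⟨fun i => p.1 i + σ (p.2.1 i), by
      convert p.2.2 using 1
      ext i
      simp only [Function.comp_apply, map_add, hσ, mkQ_coe_eq_zero, zero_add]⟩
  left_inv w := by ext; simp
  right_inv p := by
    ext <;> simp only [Function.comp_apply, map_add, hσ, mkQ_coe_eq_zero, zero_add,
      add_sub_cancel_right]

theorem disjoint_map_mkQ_iff {W U V : Submodule R M} (hU : W ≤ U) (hV : W ≤ V) :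
    Disjoint (V.map W.mkQ) (U.map W.mkQ) ↔ U ⊓ V = W := by
  rw [disjoint_iff, ← (comap_injective_of_surjective W.mkQ_surjective).eq_iff, comap_inf,
    comap_map_mkQ, comap_map_mkQ, comap_bot, ker_mkQ, sup_eq_right.2 hU, sup_eq_right.2 hV,
    inf_comm]

end QuotientTuples

section Counting

variable {F Q : Type*} [Field F] [AddCommGroup Q] [Module F Q]

def linearIndependentEquivSpanEq [Module.Finite F Q] {k : ℕ} (V : Submodule F Q)
    (hV : finrank F V = k) :
    {w : Fin k → V // LinearIndependent F w} ≃
      {w : Fin k → Q // LinearIndependent F w ∧ span F (Set.range w) = V} where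
  toFun w := ⟨V.subtype ∘ w.1, w.2.map' _ V.ker_subtype, by
    have hle : span F (Set.range (V.subtype ∘ w.1)) ≤ V := by
      rw [span_le]; rintro _ ⟨i, rfl⟩; exact (w.1 i).2
    refine eq_of_le_of_finrank_le hle ?_
    rw [hV, finrank_span_eq_card (w.2.map' _ V.ker_subtype), Fintype.card_fin]⟩
  invFun w := ⟨fun i => ⟨w.1 i, by
      obtain ⟨w, -, rfl⟩ := w
      exact subset_span (Set.mem_range_self i)⟩,
    LinearIndependent.of_comp V.subtype w.2.1⟩
  left_inv _ := rfl
  right_inv _ := rfl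

variable [Fintype F] [Finite Q]

theorem card_linearIndependent_span_mul (k : ℕ) (P : Submodule F Q → Prop) :
    Nat.card {w : Fin k → Q // LinearIndependent F w ∧ P (span F (Set.range w))} =
      Nat.card {V : Submodule F Q // finrank F V = k ∧ P V} * galpha (Fintype.card F) k k := by
  refine Nat.card_subtype_eq_mul_of_card_fiber (fun w => span F (Set.range w))
    (fun w hw => ⟨by rw [finrank_span_eq_card hw.1, Fintype.card_fin], hw.2⟩) fun V hV => ?_
  rw [galpha_eq_prod_fin, ← hV.1, ← card_linearIndependent le_rfl,
    Nat.card_congr (linearIndependentEquivSpanEq V rfl)]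
  exact Nat.card_congr (Equiv.subtypeEquivRight fun w =>
    ⟨fun h => ⟨h.1.1, h.2⟩, fun h => ⟨⟨h.1, h.2.symm ▸ hV.2⟩, h.2⟩⟩)

theorem card_finrank_eq_disjoint_mul (A : Submodule F Q) {k : ℕ}
    (hk : finrank F A + k ≤ finrank F Q) :
    Nat.card {V : Submodule F Q // finrank F V = k ∧ Disjoint V A} *
        galpha (Fintype.card F) k k =
      Fintype.card F ^ (finrank F A * k) *
        galpha (Fintype.card F) (finrank F Q - finrank F A) k := by
  obtain ⟨σ, hσ⟩ := A.mkQ.exists_rightInverse_of_surjective (range_mkQ A)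
  have : Finite (Q ⧸ A) := Finite.of_surjective _ (mkQ_surjective A)
  have hQA : finrank F (Q ⧸ A) = finrank F Q - finrank F A := by
    have := finrank_quotient_add_finrank A
    omega
  rw [← card_linearIndependent_span_mul k (Disjoint · A),
    Nat.card_congr (Equiv.subtypeEquivRight fun w => linearIndependent_mkQ_comp_iff.symm),
    Nat.card_congr (linearIndependentMkQEquiv A (LinearMap.congr_fun hσ) k), Nat.card_prod,
    Nat.card_fun, Module.natCard_eq_pow_finrank (K := F), card_linearIndependent (by omega), hQA,
    galpha_eq_prod_fin, Nat.card_fin, Nat.card_eq_fintype_card, pow_mul]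

theorem card_finrank_eq_mul {k : ℕ} (hk : k ≤ finrank F Q) :
    Nat.card {V : Submodule F Q // finrank F V = k} * galpha (Fintype.card F) k k =
      galpha (Fintype.card F) (finrank F Q) k := by
  simpa using card_finrank_eq_disjoint_mul (⊥ : Submodule F Q) (k := k) (by simpa using hk)

theorem card_finrank_eq {k : ℕ} (hk : k ≤ finrank F Q) :
    Nat.card {V : Submodule F Q // finrank F V = k} = gauss (Fintype.card F) (finrank F Q) k := by
  rw [gauss, ← card_finrank_eq_mul hk,
    Nat.mul_div_cancel _ (galpha_self_pos (Fintype.one_lt_card (α := F)) k)]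

variable (F) in
theorem gauss_mul_galpha_self {m k : ℕ} (hk : k ≤ m) :
    gauss (Fintype.card F) m k * galpha (Fintype.card F) k k = galpha (Fintype.card F) m k := by
  have h := card_finrank_eq_mul (F := F) (Q := Fin m → F) (k := k) (by simpa using hk)
  rwa [card_finrank_eq (by simpa using hk), finrank_fin_fun] at h

variable (F) in
theorem gauss_sub_right {m k : ℕ} (hk : k ≤ m) :
    gauss (Fintype.card F) m (m - k) = gauss (Fintype.card F) m k := by
  set q := Fintype.card F
  have hq : 1 < q := Fintype.one_lt_card
  have hsplit := galpha_self_eq_mul q hk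
  have hsplit' := galpha_self_eq_mul q (Nat.sub_le m k)
  rw [Nat.sub_sub_self hk] at hsplit'
  have hP : 0 < q ^ (k * (m - k)) * (galpha q k k * galpha q (m - k) (m - k)) := by
    have := galpha_self_pos hq k
    have := galpha_self_pos hq (m - k)
    positivity
  refine Nat.eq_of_mul_eq_mul_right hP ?_
  calc gauss q m (m - k) * (q ^ (k * (m - k)) * (galpha q k k * galpha q (m - k) (m - k)))
      = galpha q m (m - k) * (q ^ ((m - k) * k) * galpha q k k) := by
        rw [← gauss_mul_galpha_self F (Nat.sub_le m k)]; ring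
    _ = galpha q m k * (q ^ (k * (m - k)) * galpha q (m - k) (m - k)) := by
        rw [← hsplit, ← hsplit']
    _ = gauss q m k * (q ^ (k * (m - k)) * (galpha q k k * galpha q (m - k) (m - k))) := by
        rw [← gauss_mul_galpha_self F hk]; ring

theorem card_finrank_eq_disjoint (A : Submodule F Q) {k : ℕ}
    (hk : finrank F A + k ≤ finrank F Q) :
    Nat.card {V : Submodule F Q // finrank F V = k ∧ Disjoint V A} =
      Fintype.card F ^ (finrank F A * k) *
        gauss (Fintype.card F) (finrank F Q - finrank F A) k := by
  refine Nat.eq_of_mul_eq_mul_right (galpha_self_pos (Fintype.one_lt_card (α := F)) k) ?_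
  rw [card_finrank_eq_disjoint_mul A hk, mul_assoc, gauss_mul_galpha_self F (by omega)]

end Counting

section Intersections

variable {F M : Type*} [Field F] [AddCommGroup M] [Module F M]

theorem finrank_map_mkQ_add_finrank [Module.Finite F M] {W V : Submodule F M} (h : W ≤ V) :
    finrank F (V.map W.mkQ) + finrank F W = finrank F V := by
  have hker : finrank F (W.comap V.subtype) = finrank F W := (comapSubtypeEquivOfLe h).finrank_eq
  have := LinearMap.finrank_range_add_finrank_ker (W.mkQ.domRestrict V)
  rwa [LinearMap.range_domRestrict, LinearMap.ker_domRestrict, ker_mkQ, hker] at this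

def infEqEquivDisjointMapMkQ [Module.Finite F M] {U W : Submodule F M} (hWU : W ≤ U) {s : ℕ}
    (hs : finrank F W ≤ s) :
    {V : Submodule F M // finrank F V = s ∧ U ⊓ V = W} ≃
      {V : Submodule F (M ⧸ W) // finrank F V = s - finrank F W ∧ Disjoint V (U.map W.mkQ)} where
  toFun V :=
    have hWV : W ≤ V.1 := V.2.2.ge.trans inf_le_right
    ⟨V.1.map W.mkQ, by have := finrank_map_mkQ_add_finrank hWV; omega,
      (disjoint_map_mkQ_iff hWU hWV).2 V.2.2⟩
  invFun V :=
    have hWV : W ≤ V.1.comap W.mkQ := le_comap_mkQ W V.1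
    have hV : (V.1.comap W.mkQ).map W.mkQ = V.1 := map_comap_eq_of_surjective W.mkQ_surjective _
    ⟨V.1.comap W.mkQ, by have := finrank_map_mkQ_add_finrank hWV; rw [hV] at this; omega,
      (disjoint_map_mkQ_iff hWU hWV).1 (by rw [hV]; exact V.2.2)⟩
  left_inv V := Subtype.ext <| by
    simp only [comap_map_mkQ, sup_eq_right.2 (V.2.2.ge.trans inf_le_right)]
  right_inv V := Subtype.ext <| map_comap_eq_of_surjective W.mkQ_surjective _

variable [Fintype F] [Finite M]

theorem card_le_finrank_eq (U : Submodule F M) {t : ℕ} (ht : t ≤ finrank F U) :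
    Nat.card {W : Submodule F M // W ≤ U ∧ finrank F W = t} =
      gauss (Fintype.card F) (finrank F U) t := by
  rw [← card_finrank_eq ht]
  refine Nat.card_congr <|
    (Equiv.subtypeSubtypeEquivSubtypeInter (· ≤ U) (finrank F · = t)).symm.trans
      (U.mapIic.toEquiv.subtypeEquiv fun W => ?_).symm
  exact (finrank_map_subtype_eq U W).symm ▸ Iff.rfl

theorem card_finrank_inf_eq (U : Submodule F M) {s t : ℕ} (htU : t ≤ finrank F U) (hts : t ≤ s)
    (hs : s - t ≤ finrank F M - finrank F U) :
    Nat.card {V : Submodule F M // finrank F V = s ∧ finrank F ↥(U ⊓ V) = t} =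
      gauss (Fintype.card F) (finrank F U) t * (Fintype.card F ^ ((finrank F U - t) * (s - t)) *
        gauss (Fintype.card F) (finrank F M - finrank F U) (s - t)) := by
  rw [← card_le_finrank_eq U htU]
  refine Nat.card_subtype_eq_mul_of_card_fiber (U ⊓ ·) (fun V hV => ⟨inf_le_left, hV.2⟩)
    fun W hW => ?_
  have : Finite (M ⧸ W) := Finite.of_surjective _ W.mkQ_surjective
  have hA : finrank F (U.map W.mkQ) = finrank F U - t := by
    have := finrank_map_mkQ_add_finrank hW.1
    omega
  have hQ : finrank F (M ⧸ W) = finrank F M - t := by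
    have := finrank_quotient_add_finrank W
    omega
  have hUM := U.finrank_le
  have e : {V : Submodule F M // (finrank F V = s ∧ finrank F ↥(U ⊓ V) = t) ∧ U ⊓ V = W} ≃
      {V : Submodule F M // finrank F V = s ∧ U ⊓ V = W} :=
    Equiv.subtypeEquivRight fun V => ⟨fun h => ⟨h.1.1, h.2⟩, fun h => ⟨⟨h.1, h.2 ▸ hW.2⟩, h.2⟩⟩
  rw [Nat.card_congr e, Nat.card_congr (infEqEquivDisjointMapMkQ hW.1 (hW.2 ▸ hts)),
    card_finrank_eq_disjoint _ (by omega), hA, hQ, hW.2,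
    show finrank F M - t - (finrank F U - t) = finrank F M - finrank F U by omega]

end Intersections

theorem dS_add_two_mul_finrank_inf {F : Type} [Field F] {n : ℕ} (U V : Submodule F (Fin n → F)) :
    dS U V + 2 * finrank F ↥(U ⊓ V) = finrank F U + finrank F V := by
  have hsum := finrank_sup_add_finrank_inf_eq U V
  have hle : finrank F ↥(U ⊓ V) ≤ finrank F ↥(U ⊔ V) := finrank_mono (inf_le_left.trans le_sup_left)
  unfold dS
  omega

theorem stmt11_general (F : Type) [Field F] [Fintype F] (n r s d : ℕ)
    (U : Submodule F (Fin n → F)) (hU : Module.finrank F ↥U = r) :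
    (∀ u : ℕ, (2 * u : ℤ) = (r : ℤ) + d - s → u ≤ min r d → d - u ≤ n - r →
      Nat.card {V : Submodule F (Fin n → F) // Module.finrank F ↥V = s ∧ dS U V = d} =
        (Fintype.card F) ^ (u * (d - u)) *
          gauss (Fintype.card F) r u * gauss (Fintype.card F) (n - r) (d - u)) ∧
    (Odd ((r : ℤ) + d - s) →
      Nat.card {V : Submodule F (Fin n → F) // Module.finrank F ↥V = s ∧ dS U V = d} = 0) := by
  have hdist : ∀ V : Submodule F (Fin n → F), finrank F V = s →
      dS U V + 2 * finrank F ↥(U ⊓ V) = r + s := fun V hV => by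
    rw [dS_add_two_mul_finrank_inf, hU, hV]
  refine ⟨fun u hu hurd hdu => ?_, fun ⟨k, hk⟩ => ?_⟩
  · have hur : u ≤ r := hurd.trans (min_le_left r d)
    have hV : ∀ V : Submodule F (Fin n → F), finrank F V = s ∧ dS U V = d ↔
        finrank F V = s ∧ finrank F ↥(U ⊓ V) = r - u := fun V =>
      and_congr_right fun hVs => by have := hdist V hVs; omega
    rw [Nat.card_congr (Equiv.subtypeEquivRight hV),
      card_finrank_inf_eq U (by omega) (by omega) (by rw [hU, finrank_fin_fun]; omega), hU,
      finrank_fin_fun, gauss_sub_right F hur, Nat.sub_sub_self hur,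
      show s - (r - u) = d - u by omega]
    ring
  · refine Nat.card_eq_zero.2 (.inl ⟨fun ⟨V, hVs, hVd⟩ => ?_⟩)
    have := hdist V hVs
    omega

theorem stmt11 (F : Type) [Field F] [Fintype F] (n r s d : ℕ) (hrn : r ≤ n)
    (U : Submodule F (Fin n → F)) (hU : Module.finrank F ↥U = r) :
    (∀ u : ℕ, (2 * u : ℤ) = (r : ℤ) + d - s → u ≤ min r d → d - u ≤ n - r →
      Nat.card {V : Submodule F (Fin n → F) // Module.finrank F ↥V = s ∧ dS U V = d} =
        (Fintype.card F) ^ (u * (d - u)) *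
          gauss (Fintype.card F) r u * gauss (Fintype.card F) (n - r) (d - u)) ∧
    (Odd ((r : ℤ) + d - s) →
      Nat.card {V : Submodule F (Fin n → F) // Module.finrank F ↥V = s ∧ dS U V = d} = 0) :=
  stmt11_general F n r s d U hU
end

section
/- For any subspaces A, B of GF(q)^n with dim(A)=a, dim(B)=b, and d_S(A,B)=w, the number of c-dimensional subspaces C with d_S(A,C)=u and d_S(B,C)=s depends only on u, s, w, a, b, c (and not on the particular choice of A and B). -/
/-!
A linear automorphism `e` of `V = F^n` permutes subspaces, preserving dimensions and `d_S`, so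
it suffices to find `e` with `e(A) = A'` and `e(B) = B'`. Since `2 dim(A ∩ B) + w = a + b`, the
two pairs have intersections of the same dimension. Choosing a complement `C` of `A ∩ B` and a
complement `E` of `A + B` gives `V = (A ∩ B) ⊕ (A ∩ C) ⊕ (B ∩ C) ⊕ E` with `A = (A ∩ C) ⊕ (A ∩ B)`
and `B = (B ∩ C) ⊕ (A ∩ B)`; the corresponding pieces for `A', B'` have the same dimensions, and
matching bases piece by piece gives `e`.
-/

open Module Submodule

theorem iSupIndep_fin_four_of_disjoint {α : Type*} [CompleteLattice α] [IsModularLattice α]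
    {a b c d : α} (hb : Disjoint b a) (hc : Disjoint c (b ⊔ a))
    (hd : Disjoint d (c ⊔ (b ⊔ a))) : iSupIndep ![a, b, c, d] := by
  rw [iSupIndep_iff_supIndep_univ, show (Finset.univ : Finset (Fin 4)) = {3, 2, 1, 0} by decide]
  refine .insert (.insert (.insert (Finset.supIndep_singleton _ _) ?_) ?_) ?_ <;> simpa

theorem IsCompl.inf_sup_eq_of_le {α : Type*} [Lattice α] [BoundedOrder α] [IsModularLattice α]
    {w c x : α} (h : IsCompl w c) (hw : w ≤ x) : x ⊓ c ⊔ w = x := by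
  rw [sup_comm, inf_comm, ← sup_inf_assoc_of_le c hw, h.sup_eq_top, top_inf_eq]

section Ring

variable {R M : Type*} [Ring R] [AddCommGroup M] [Module R M]

theorem DirectSum.isInternal_of_isCompl_inf_of_isCompl_sup {X Y C E : Submodule R M}
    (hC : IsCompl (X ⊓ Y) C) (hE : IsCompl (X ⊔ Y) E) :
    DirectSum.IsInternal ![X ⊓ Y, X ⊓ C, Y ⊓ C, E] := by
  have hX : X ⊓ C ⊔ X ⊓ Y = X := hC.inf_sup_eq_of_le inf_le_left
  have hXY : Y ⊓ C ⊔ X = X ⊔ Y :=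
    calc Y ⊓ C ⊔ X = Y ⊓ C ⊔ X ⊓ Y ⊔ X := by
          rw [sup_assoc, sup_eq_right.2 (inf_le_left : X ⊓ Y ≤ X)]
      _ = X ⊔ Y := by rw [hC.inf_sup_eq_of_le inf_le_right, sup_comm]
  refine isInternal_submodule_of_iSupIndep_of_iSup_eq_top
    (iSupIndep_fin_four_of_disjoint ?_ ?_ ?_) ?_
  · exact hC.disjoint.symm.mono_left inf_le_right
  · rw [hX, disjoint_iff, ← hC.inf_eq_bot]
    ac_rfl
  · rw [hX, hXY]
    exact hE.disjoint.symm
  · simp only [iSup, Fin.range_fin_succ, Matrix.cons_val_zero, Fin.tail_vecCons,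
      Matrix.cons_val_fin_one, Matrix.range_empty, insert_empty_eq, sSup_insert, sSup_singleton]
    rw [← sup_assoc, sup_comm (X ⊓ Y), hX, ← sup_assoc, sup_comm X, hXY, hE.sup_eq_top]

theorem DirectSum.IsInternal.span_collectedBasis {ι : Type*} [DecidableEq ι]
    {p : ι → Submodule R M} (hp : DirectSum.IsInternal p) {α : ι → Type*}
    (b : ∀ i, Basis (α i) R (p i)) (i : ι) :
    span R (Set.range (hp.collectedBasis b ∘ Sigma.mk i)) = p i := by
  have h := (b i).span_eq
  apply_fun Submodule.map (p i).subtype at h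
  rw [map_span, map_subtype_top, ← Set.range_comp] at h
  simpa [Function.comp_def] using h

end Ring

section FiniteDimensional

variable {K V : Type*} [Field K] [AddCommGroup V] [Module K V] [FiniteDimensional K V]

theorem exists_linearEquiv_map_eq_of_isInternal {ι : Type*} [DecidableEq ι]
    {p p' : ι → Submodule K V} (hp : DirectSum.IsInternal p) (hp' : DirectSum.IsInternal p')
    (h : ∀ i, finrank K (p i) = finrank K (p' i)) :
    ∃ e : V ≃ₗ[K] V, ∀ i, (p i).map (e : V →ₗ[K] V) = p' i := by
  let v := fun i => finBasis K (p i)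
  let v' := fun i => finBasisOfFinrankEq K (p' i) (h i).symm
  let e := (hp.collectedBasis v).equiv (hp'.collectedBasis v') (Equiv.refl _)
  refine ⟨e, fun i => ?_⟩
  rw [← hp.span_collectedBasis v i, ← hp'.span_collectedBasis v' i, map_span, ← Set.range_comp]
  congr 2
  ext j
  exact Basis.equiv_apply _ _ _ _

theorem IsCompl.finrank_inf_add_finrank {W C X : Submodule K V} (h : IsCompl W C) (hW : W ≤ X) :
    finrank K ↥(X ⊓ C) + finrank K W = finrank K X := by
  have := finrank_sup_add_finrank_inf_eq (X ⊓ C) W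
  rwa [h.inf_sup_eq_of_le hW, disjoint_iff.1 (h.disjoint.symm.mono_left inf_le_right),
    finrank_bot, add_zero, eq_comm] at this

theorem exists_linearEquiv_map_eq_map_eq {X Y X' Y' : Submodule K V}
    (hX : finrank K X = finrank K X') (hY : finrank K Y = finrank K Y')
    (hXY : finrank K ↥(X ⊓ Y) = finrank K ↥(X' ⊓ Y')) :
    ∃ e : V ≃ₗ[K] V, X.map (e : V →ₗ[K] V) = X' ∧ Y.map (e : V →ₗ[K] V) = Y' := by
  obtain ⟨C, hC⟩ := Submodule.exists_isCompl (X ⊓ Y)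
  obtain ⟨E, hE⟩ := Submodule.exists_isCompl (X ⊔ Y)
  obtain ⟨C', hC'⟩ := Submodule.exists_isCompl (X' ⊓ Y')
  obtain ⟨E', hE'⟩ := Submodule.exists_isCompl (X' ⊔ Y')
  have hXC : finrank K ↥(X ⊓ C) = finrank K ↥(X' ⊓ C') := by
    have := hC.finrank_inf_add_finrank (X := X) inf_le_left
    have := hC'.finrank_inf_add_finrank (X := X') inf_le_left
    omega
  have hYC : finrank K ↥(Y ⊓ C) = finrank K ↥(Y' ⊓ C') := by
    have := hC.finrank_inf_add_finrank (X := Y) inf_le_right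
    have := hC'.finrank_inf_add_finrank (X := Y') inf_le_right
    omega
  have hEE' : finrank K E = finrank K E' := by
    have := finrank_add_eq_of_isCompl hE
    have := finrank_add_eq_of_isCompl hE'
    have := finrank_sup_add_finrank_inf_eq X Y
    have := finrank_sup_add_finrank_inf_eq X' Y'
    omega
  obtain ⟨e, he⟩ := exists_linearEquiv_map_eq_of_isInternal
    (DirectSum.isInternal_of_isCompl_inf_of_isCompl_sup hC hE)
    (DirectSum.isInternal_of_isCompl_inf_of_isCompl_sup hC' hE')
    fun i => by fin_cases i <;> assumption
  refine ⟨e, ?_, ?_⟩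
  · rw [← hC.inf_sup_eq_of_le inf_le_left, ← hC'.inf_sup_eq_of_le inf_le_left, Submodule.map_sup]
    exact congr_arg₂ (· ⊔ ·) (he 1) (he 0)
  · rw [← hC.inf_sup_eq_of_le inf_le_right, ← hC'.inf_sup_eq_of_le inf_le_right, Submodule.map_sup]
    exact congr_arg₂ (· ⊔ ·) (he 2) (he 0)

end FiniteDimensional

section SubspaceDistance

variable {F : Type} [Field F] {n : ℕ}

theorem finrank_inf_mul_two_add_dS (U W : Submodule F (Fin n → F)) :
    finrank F ↥(U ⊓ W) * 2 + dS U W = finrank F U + finrank F W := by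
  have := finrank_sup_add_finrank_inf_eq U W
  have : finrank F ↥(U ⊓ W) ≤ finrank F ↥(U ⊔ W) := finrank_mono inf_le_sup
  unfold dS
  omega

theorem dS_map_linearEquiv (e : (Fin n → F) ≃ₗ[F] (Fin n → F)) (U W : Submodule F (Fin n → F)) :
    dS (U.map (e : (Fin n → F) →ₗ[F] (Fin n → F))) (W.map (e : (Fin n → F) →ₗ[F] (Fin n → F))) =
      dS U W := by
  unfold dS
  rw [← Submodule.map_sup, ← map_inf _ e.injective, LinearEquiv.finrank_map_eq,
    LinearEquiv.finrank_map_eq]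

end SubspaceDistance

theorem stmt12_general (F : Type) [Field F] (n a b c u s w : ℕ)
    (A B A' B' : Submodule F (Fin n → F))
    (hA : Module.finrank F ↥A = a) (hB : Module.finrank F ↥B = b) (hAB : dS A B = w)
    (hA' : Module.finrank F ↥A' = a) (hB' : Module.finrank F ↥B' = b) (hA'B' : dS A' B' = w) :
    Nat.card {C : Submodule F (Fin n → F) //
        Module.finrank F ↥C = c ∧ dS A C = u ∧ dS B C = s} =
      Nat.card {C : Submodule F (Fin n → F) //
        Module.finrank F ↥C = c ∧ dS A' C = u ∧ dS B' C = s} := by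
  have := finrank_inf_mul_two_add_dS A B
  have := finrank_inf_mul_two_add_dS A' B'
  obtain ⟨e, rfl, rfl⟩ := exists_linearEquiv_map_eq_map_eq (X := A) (Y := B)
    (hA.trans hA'.symm) (hB.trans hB'.symm) (by omega)
  refine Nat.card_congr ((orderIsoMapComap e).toEquiv.subtypeEquiv fun C => ?_)
  rw [OrderIso.coe_toEquiv, orderIsoMapComap_apply, LinearEquiv.finrank_map_eq,
    dS_map_linearEquiv, dS_map_linearEquiv]

theorem stmt12 (F : Type) [Field F] [Fintype F] (n a b c u s w : ℕ)
    (A B A' B' : Submodule F (Fin n → F))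
    (hA : Module.finrank F ↥A = a) (hB : Module.finrank F ↥B = b) (hAB : dS A B = w)
    (hA' : Module.finrank F ↥A' = a) (hB' : Module.finrank F ↥B' = b) (hA'B' : dS A' B' = w) :
    Nat.card {C : Submodule F (Fin n → F) //
        Module.finrank F ↥C = c ∧ dS A C = u ∧ dS B C = s} =
      Nat.card {C : Submodule F (Fin n → F) //
        Module.finrank F ↥C = c ∧ dS A' C = u ∧ dS B' C = s} :=
  stmt12_general F n a b c u s w A B A' B' hA hB hAB hA' hB' hA'B'
end

section
/- Let A, B be subspaces of GF(q)^n with dim(A)=a, dim(B)=b, and d_S(A,B)=u+s. If C is a c-dimensional subspace with d_S(A,C)=u and d_S(B,C)=s, then C∩A∩B = A∩B and C = (C∩A) + (C∩B). -/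
theorem stmt15 (F : Type) [Field F] [Fintype F] (n a b c u s : ℕ)
    (A B C : Submodule F (Fin n → F))
    (hA : Module.finrank F ↥A = a) (hB : Module.finrank F ↥B = b)
    (hAB : dS A B = u + s)
    (hC : Module.finrank F ↥C = c) (hAC : dS A C = u) (hBC : dS B C = s) :
    C ⊓ A ⊓ B = A ⊓ B ∧ C = C ⊓ A ⊔ C ⊓ B := by
  have key : ∀ U V : Submodule F (Fin n → F),
      dS U V + 2 * Module.finrank F ↥(U ⊓ V)
        = Module.finrank F ↥U + Module.finrank F ↥V := by
    intro U V
    have h1 := Submodule.finrank_sup_add_finrank_inf_eq U V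
    have h2 : Module.finrank F ↥(U ⊓ V) ≤ Module.finrank F ↥(U ⊔ V) :=
      Submodule.finrank_mono (le_trans inf_le_left le_sup_left)
    unfold dS
    omega
  have e1 := key A C
  have e2 := key B C
  have e3 := key A B
  rw [hAC, hA, hC] at e1
  rw [hBC, hB, hC] at e2
  rw [hAB, hA, hB] at e3
  -- dimension formula for (C⊓A) and (C⊓B)
  have hsum := Submodule.finrank_sup_add_finrank_inf_eq (C ⊓ A) (C ⊓ B)
  have hinf_eq : (C ⊓ A) ⊓ (C ⊓ B) = C ⊓ A ⊓ B := by
    exact (inf_inf_distrib_left C A B).symm.trans (inf_assoc C A B).symm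
  rw [hinf_eq] at hsum
  have hAC_comm : A ⊓ C = C ⊓ A := inf_comm A C
  have hBC_comm : B ⊓ C = C ⊓ B := inf_comm B C
  rw [hAC_comm] at e1
  rw [hBC_comm] at e2
  have hm_le : Module.finrank F ↥(C ⊓ A ⊔ C ⊓ B) ≤ c := by
    rw [← hC]
    exact Submodule.finrank_mono (sup_le inf_le_left inf_le_left)
  have hw_le : Module.finrank F ↥(C ⊓ A ⊓ B) ≤ Module.finrank F ↥(A ⊓ B) :=
    Submodule.finrank_mono (inf_le_inf_right B inf_le_right)
  have hw : Module.finrank F ↥(C ⊓ A ⊓ B) = Module.finrank F ↥(A ⊓ B) := by omega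
  have hm : Module.finrank F ↥(C ⊓ A ⊔ C ⊓ B) = c := by omega
  constructor
  · exact Submodule.eq_of_le_of_finrank_eq (inf_le_inf_right B inf_le_right) hw
  · exact (Submodule.eq_of_le_of_finrank_eq (sup_le inf_le_left inf_le_left)
      (by rw [hm, hC])).symm
end

section
/- Let C be a rank metric code in GF(q)^{m×n} with minimum rank distance d, let C be a codeword, and let W be a w-dimensional subspace of GF(q)^n with w ≥ d. Then the number of codewords D ∈ C such that the row space of D−C equals W is at most α(m, w−d+1) = ∏_{i=0}^{w−d}(q^m − q^i). -/
/-! Fix a matrix `B` whose rows form a basis of `W`. Each codeword `D` with row space of `D - C`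
equal to `W` factors as `D - C = Φ D * B` with `Φ D` an `m × w` matrix of rank `w`, and
`rank (Φ D - Φ D') ≥ rank (D - D') ≥ d`. Two such `Φ D` cannot share their first `w - d + 1`
columns, since their difference would then have rank at most `d - 1`. Hence taking these columns
injects the codewords into the linearly independent `(w - d + 1)`-tuples in `F^m`, which are
counted by `galpha`. -/

open Module

namespace Matrix

variable {F : Type*} [Field F]

theorem rank_eq_zero_iff {m n : Type*} [Finite m] [Fintype n] {A : Matrix m n F} :
    A.rank = 0 ↔ A = 0 := by
  refine ⟨fun h => ?_, fun h => h ▸ rank_zero⟩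
  rw [rank_eq_finrank_span_row, Submodule.finrank_eq_zero, Submodule.span_eq_bot] at h
  ext i j
  simpa using congrFun (h (A i) ⟨i, rfl⟩) j

theorem linearIndependent_col_iff_rank_eq_card {m n : Type*} [Fintype n] {A : Matrix m n F} :
    LinearIndependent F A.col ↔ A.rank = Fintype.card n := by
  rw [linearIndependent_iff_card_eq_finrank_span, rank_eq_finrank_span_cols, eq_comm]
  rfl

theorem rank_le_card_sub_of_col_eq_zero {m n : Type*} [Fintype m] [Fintype n] [DecidableEq n]
    (A : Matrix m n F) (s : Finset n) (h : ∀ j ∈ s, A.col j = 0) :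
    A.rank ≤ Fintype.card n - s.card := by
  rw [← Finset.card_compl, ← rank_transpose]
  refine rank_le_card_of_support_subset Aᵀ sᶜ fun j hj => ?_
  exact Finset.mem_coe.mpr (Finset.mem_compl.mpr fun hs => hj (h j hs))

end Matrix

theorem rank_eq_finrank_rowSpace {F : Type} [Field F] {m n : ℕ} (A : Matrix (Fin m) (Fin n) F) :
    A.rank = finrank F (rowSpace A) :=
  A.rank_eq_finrank_span_row

theorem exists_rowSpace_eq {F : Type} [Field F] {n w : ℕ} (W : Submodule F (Fin n → F))
    (hW : finrank F W = w) : ∃ B : Matrix (Fin w) (Fin n) F, rowSpace B = W := by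
  let b := finBasisOfFinrankEq F W hW
  refine ⟨Matrix.of fun k => (b k : Fin n → F), ?_⟩
  change Submodule.span F (Set.range (W.subtype ∘ b)) = W
  rw [Set.range_comp, Submodule.span_image, b.span_eq, Submodule.map_top, Submodule.range_subtype]

theorem exists_eq_mul_of_rowSpace_le {F : Type} [Field F] {l m n : ℕ}
    {A : Matrix (Fin m) (Fin n) F} {B : Matrix (Fin l) (Fin n) F}
    (h : rowSpace A ≤ rowSpace B) : ∃ X : Matrix (Fin m) (Fin l) F, A = X * B := by
  choose X hX using fun i =>
    (Submodule.mem_span_range_iff_exists_fun F).mp (h (Submodule.subset_span ⟨i, rfl⟩))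
  refine ⟨Matrix.of X, ?_⟩
  ext i j
  simp [Matrix.mul_apply, ← hX i, Finset.sum_apply]

theorem card_le_galpha_of_constantRank {F : Type*} [Field F] [Fintype F] {ι : Type*} {m w d : ℕ}
    (Φ : ι → Matrix (Fin m) (Fin w) F) (hrank : ∀ i, (Φ i).rank = w)
    (hdist : ∀ i j, i ≠ j → d ≤ (Φ i - Φ j).rank) (hd : 1 ≤ d) (hdw : d ≤ w) :
    Nat.card ι ≤ galpha (Fintype.card F) m (w - d + 1) := by
  classical
  rcases isEmpty_or_nonempty ι with hι | ⟨⟨i₀⟩⟩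
  · simp
  set u := w - d + 1
  have huw : u ≤ w := by omega
  have hum : u ≤ m := huw.trans (hrank i₀ ▸ (Φ i₀).rank_le_height)
  let π : ι → {v : Fin u → Fin m → F // LinearIndependent F v} := fun i =>
    ⟨(Φ i).col ∘ Fin.castLE huw,
      (Matrix.linearIndependent_col_iff_rank_eq_card.mpr (by simp [hrank])).comp _
        (Fin.castLE_injective huw)⟩
  have hπ : Function.Injective π := by
    intro i j hij
    by_contra hne
    have hcols : ∀ k, (Φ i - Φ j).col (Fin.castLE huw k) = 0 := fun k =>
      sub_eq_zero.mpr (congrFun (congrArg Subtype.val hij) k)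
    have hle := (Φ i - Φ j).rank_le_card_sub_of_col_eq_zero (Finset.univ.map (Fin.castLEEmb huw))
      (by simpa using hcols)
    rw [Fintype.card_fin, Finset.card_map, Finset.card_univ, Fintype.card_fin] at hle
    have := hdist i j hne
    omega
  calc Nat.card ι ≤ Nat.card {v : Fin u → Fin m → F // LinearIndependent F v} :=
        Nat.card_le_card_of_injective π hπ
    _ = galpha (Fintype.card F) m u := by
      rw [card_linearIndependent (by simpa using hum), galpha, ← Fin.prod_univ_eq_prod_range]
      simp

theorem stmt18_general (F : Type) [Field F] [Fintype F] (m n d w : ℕ)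
    (𝒞 : Set (Matrix (Fin m) (Fin n) F))
    (hmin : sInf {e : ℕ | ∃ X ∈ 𝒞, ∃ Y ∈ 𝒞, X ≠ Y ∧ (X - Y).rank = e} = d)
    (hnontriv : ∃ X ∈ 𝒞, ∃ Y ∈ 𝒞, X ≠ Y)
    (C : Matrix (Fin m) (Fin n) F)
    (W : Submodule F (Fin n → F)) (hW : Module.finrank F ↥W = w) (hwd : d ≤ w) :
    Nat.card {D : Matrix (Fin m) (Fin n) F // D ∈ 𝒞 ∧ rowSpace (D - C) = W} ≤
      galpha (Fintype.card F) m (w - d + 1) := by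
  have hdist : ∀ X ∈ 𝒞, ∀ Y ∈ 𝒞, X ≠ Y → d ≤ (X - Y).rank := fun X hX Y hY hXY =>
    hmin ▸ Nat.sInf_le ⟨X, hX, Y, hY, hXY, rfl⟩
  have hd : 1 ≤ d := by
    obtain ⟨X, hX, Y, hY, hXY⟩ := hnontriv
    have hmem := Nat.sInf_mem (s := {e : ℕ | ∃ X ∈ 𝒞, ∃ Y ∈ 𝒞, X ≠ Y ∧ (X - Y).rank = e})
      ⟨_, X, hX, Y, hY, hXY, rfl⟩
    obtain ⟨X', -, Y', -, hXY', hrank⟩ := hmin ▸ hmem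
    rw [← hrank, Nat.one_le_iff_ne_zero, Ne, Matrix.rank_eq_zero_iff, sub_eq_zero]
    exact hXY'
  obtain ⟨B, hB⟩ := exists_rowSpace_eq W hW
  choose Φ hΦ using fun D : {D // D ∈ 𝒞 ∧ rowSpace (D - C) = W} =>
    exists_eq_mul_of_rowSpace_le (D.2.2.trans hB.symm).le
  refine card_le_galpha_of_constantRank Φ (fun D => ?_) (fun D D' hne => ?_) hd hwd
  · refine le_antisymm (Φ D).rank_le_width ?_
    calc w = (D.1 - C).rank := by rw [rank_eq_finrank_rowSpace, D.2.2, hW]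
      _ ≤ (Φ D).rank := hΦ D ▸ Matrix.rank_mul_le_left _ _
  · calc d ≤ (D.1 - D'.1).rank := hdist _ D.2.1 _ D'.2.1 (Subtype.coe_ne_coe.mpr hne)
      _ = ((Φ D - Φ D') * B).rank := by rw [Matrix.sub_mul, ← hΦ, ← hΦ, sub_sub_sub_cancel_right]
      _ ≤ (Φ D - Φ D').rank := Matrix.rank_mul_le_left _ _

theorem stmt18 (F : Type) [Field F] [Fintype F] (m n d w : ℕ)
    (𝒞 : Set (Matrix (Fin m) (Fin n) F))
    (hmin : sInf {e : ℕ | ∃ X ∈ 𝒞, ∃ Y ∈ 𝒞, X ≠ Y ∧ (X - Y).rank = e} = d)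
    (hnontriv : ∃ X ∈ 𝒞, ∃ Y ∈ 𝒞, X ≠ Y)
    (C : Matrix (Fin m) (Fin n) F) (hC : C ∈ 𝒞)
    (W : Submodule F (Fin n → F)) (hW : Module.finrank F ↥W = w) (hwd : d ≤ w) :
    Nat.card {D : Matrix (Fin m) (Fin n) F // D ∈ 𝒞 ∧ rowSpace (D - C) = W} ≤
      galpha (Fintype.card F) m (w - d + 1) :=
  stmt18_general F m n d w 𝒞 hmin hnontriv C W hW hwd
end
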